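/- arXiv:1305.6251 — 4 statements merged into one kernel-verified Lean document; each statement's English description precedes it below -/
import Mathlib

section
/- Smoothness of the Example 2 profile: Let n ≥ 1 and let α, β, γ, κ be positive real numbers. The function u : ℝ × ℝⁿ → ℝ defined by u(t,x) = κ t^{−β} exp(−γ(1+|x|²)^{α/2}/t) for t > 0 and u(t,x) = 0 for t ≤ 0 is infinitely differentiable (C^∞) on all of ℝ × ℝⁿ, and u together with all of its partial derivatives vanishes on the set { (t,x) : t ≤ 0 }. -/
/-!
With `c(x) = γ (1 + |x|²)^{α/2}`, which is smooth and positive, the profile is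
`u(t, x) = κ c(x)^{-β} g_{-β}(t / c(x))` for all `t`, where `g_r(s) = s^r · expNegInvGlue s`
is `s^r e^{-1/s}` for `s > 0` and `0` for `s ≤ 0`. The family `g_r` is closed under differentiation,
`g_r' = r g_{r-1} + g_{r-2}`, also at `s = 0` because `e^{-1/s}` beats every power of `s`;
so induction on the order, for all `r` at once, shows that every `g_r` is `C^∞`.
The derivatives of `u` vanish on the open set `{t < 0}`, hence by continuity on its closure.
-/

open MeasureTheory

noncomputable section

/-- The whole space `ℝ × ℝⁿ` (time × space). -/
abbrev Sp (n : ℕ) : Type := ℝ × EuclideanSpace ℝ (Fin n)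

/-- Classical partial derivative in the time direction. -/
def pdt {n : ℕ} (f : Sp n → ℝ) (p : Sp n) : ℝ :=
  fderiv ℝ f p (1, 0)

/-- Classical partial derivative in the `i`-th space direction. -/
def pdx {n : ℕ} (i : Fin n) (f : Sp n → ℝ) (p : Sp n) : ℝ :=
  fderiv ℝ f p (0, EuclideanSpace.single i 1)

/-- The odd nonlinearity `s ↦ |s|^(q-1) s` (with the convention `|0|^(q-1)·0 = 0`). -/
def nl (q s : ℝ) : ℝ := |s| ^ (q - 1) * s

/-- A test function: infinitely differentiable with compact support. -/
def IsTest {n : ℕ} (φ : Sp n → ℝ) : Prop :=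
  ContDiff ℝ (⊤ : ℕ∞) φ ∧ HasCompactSupport φ

/-- `g` is the weak time-derivative of `u` on `ℝ × ℝⁿ`: `g` is locally integrable and
integration by parts against every test function holds. -/
def IsWeakDerivT {n : ℕ} (u g : Sp n → ℝ) : Prop :=
  LocallyIntegrable g volume ∧
  ∀ φ : Sp n → ℝ, IsTest φ → ∫ p, u p * pdt φ p = -∫ p, g p * φ p

/-- `g` is the weak `x_i`-derivative of `u` on `ℝ × ℝⁿ`. -/
def IsWeakDerivX {n : ℕ} (i : Fin n) (u g : Sp n → ℝ) : Prop :=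
  LocallyIntegrable g volume ∧
  ∀ φ : Sp n → ℝ, IsTest φ → ∫ p, u p * pdx i φ p = -∫ p, g p * φ p

/-- Standing assumptions on the coefficients `a_{ij}` and the dominating function `A`:
measurability, local boundedness, symmetry, and `0 ≤ Σ a_{ij} ξ_i ξ_j ≤ A |ξ|²` a.e. -/
structure Coeffs (n : ℕ) (a : Fin n → Fin n → Sp n → ℝ) (A : Sp n → ℝ) : Prop where
  meas : ∀ i j, Measurable (a i j)
  locBdd : ∀ i j, ∀ K : Set (Sp n), IsCompact K → ∃ C : ℝ, ∀ p ∈ K, |a i j p| ≤ C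
  symm : ∀ᵐ p : Sp n, ∀ i j, a i j p = a j i p
  measA : Measurable A
  nonnegA : ∀ p, 0 ≤ A p
  locBddA : ∀ K : Set (Sp n), IsCompact K → ∃ C : ℝ, ∀ p ∈ K, A p ≤ C
  quad : ∀ᵐ p : Sp n, ∀ ξ : Fin n → ℝ,
    0 ≤ ∑ i : Fin n, ∑ j : Fin n, a i j p * ξ i * ξ j ∧
    ∑ i : Fin n, ∑ j : Fin n, a i j p * ξ i * ξ j ≤ A p * ∑ i : Fin n, ξ i ^ 2

/-- Condition (8): the essential supremum of `A` over the slab `{R/2 < |x| < R}`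
is at most `c·R^(2-α)`, for every `R > 1`. -/
def Cond8 {n : ℕ} (A : Sp n → ℝ) (α c : ℝ) : Prop :=
  ∀ R : ℝ, 1 < R →
    ∀ᵐ p : Sp n, (R / 2 < ‖p.2‖ ∧ ‖p.2‖ < R) → A p ≤ c * R ^ (2 - α)

/-- `(u, v)` is a weak solution of
`u_t − Σ ∂_{x_i}(a_{ij} ∂_{x_j}u) − |u|^{q−1}u ≥ v_t − Σ ∂_{x_i}(a_{ij} ∂_{x_j}v) − |v|^{q−1}v`
in the whole space `ℝ × ℝⁿ`. -/
def WeakSolPair {n : ℕ} (q : ℝ) (a : Fin n → Fin n → Sp n → ℝ) (u v : Sp n → ℝ) : Prop :=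
  Measurable u ∧ Measurable v ∧
  LocallyIntegrable u volume ∧ LocallyIntegrable v volume ∧
  LocallyIntegrable (fun p => |u p| ^ q) volume ∧
  LocallyIntegrable (fun p => |v p| ^ q) volume ∧
  ∃ ut vt : Sp n → ℝ, ∃ ux vx : Fin n → Sp n → ℝ,
    IsWeakDerivT u ut ∧ IsWeakDerivT v vt ∧
    (∀ j, IsWeakDerivX j u (ux j)) ∧ (∀ j, IsWeakDerivX j v (vx j)) ∧
    ∀ φ : Sp n → ℝ, IsTest φ → (∀ p, 0 ≤ φ p) →
      ∫ p, (vt p * φ p + ∑ i : Fin n, ∑ j : Fin n, a i j p * pdx i φ p * vx j p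
              - nl q (v p) * φ p) ≤
      ∫ p, (ut p * φ p + ∑ i : Fin n, ∑ j : Fin n, a i j p * pdx i φ p * ux j p
              - nl q (u p) * φ p)

/-- The Example 2 profile: `u(t,x) = κ t^{−β} exp(−γ(1+|x|²)^{α/2}/t)` for `t > 0`,
extended by `0` for `t ≤ 0`. -/
def profileU (n : ℕ) (α β γ κ : ℝ) (p : Sp n) : ℝ :=
  if 0 < p.1 then κ * p.1 ^ (-β) * Real.exp (-γ * (1 + ‖p.2‖ ^ 2) ^ (α / 2) / p.1) else 0


open Filter Real Topology Set

namespace expNegInvGlue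

theorem tendsto_rpow_mul_nhds_zero (r : ℝ) :
    Tendsto (fun s ↦ s ^ r * expNegInvGlue s) (𝓝 0) (𝓝 0) := by
  simp only [expNegInvGlue, mul_ite, mul_zero]
  refine tendsto_const_nhds.if ?_
  simp only [not_le]
  refine ((tendsto_rpow_mul_exp_neg_mul_atTop_nhds_zero (-r) 1 one_pos).comp
    tendsto_inv_nhdsGT_zero).congr' ?_
  filter_upwards [self_mem_nhdsWithin] with s (hs : 0 < s)
  simp [inv_rpow hs.le, ← rpow_neg hs.le]

theorem hasDerivAt_rpow_mul (r s : ℝ) :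
    HasDerivAt (fun s ↦ s ^ r * expNegInvGlue s)
      (r * (s ^ (r - 1) * expNegInvGlue s) + s ^ (r - 2) * expNegInvGlue s) s := by
  rcases lt_trichotomy s 0 with hs | rfl | hs
  · simp only [zero_of_nonpos hs.le, mul_zero, add_zero]
    refine (hasDerivAt_const _ 0).congr_of_eventuallyEq ?_
    filter_upwards [gt_mem_nhds hs] with y hy
    rw [zero_of_nonpos hy.le, mul_zero]
  · simp only [expNegInvGlue.zero, mul_zero, add_zero, hasDerivAt_iff_tendsto_slope]
    refine ((tendsto_rpow_mul_nhds_zero (r - 1)).mono_left inf_le_left).congr' ?_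
    filter_upwards [self_mem_nhdsWithin] with s (hs : s ≠ 0)
    simp only [rpow_sub_one hs, slope_def_field, expNegInvGlue.zero, mul_zero, sub_zero]
    ring
  · have h : HasDerivAt (fun y ↦ y ^ r * exp (-y⁻¹)) _ s :=
      (hasDerivAt_rpow_const (Or.inl hs.ne')).mul (hasDerivAt_inv hs.ne').neg.exp
    refine (h.congr_of_eventuallyEq ?_).congr_deriv ?_
    · filter_upwards [lt_mem_nhds hs] with y hy
      simp [expNegInvGlue, hy.not_ge]
    · simp only [rpow_sub hs, rpow_one, Pi.neg_apply, neg_neg, expNegInvGlue, hs.not_ge,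
        ↓reduceIte, rpow_ofNat]
      ring

theorem differentiable_rpow_mul (r : ℝ) :
    Differentiable ℝ (fun s ↦ s ^ r * expNegInvGlue s) :=
  fun s ↦ (hasDerivAt_rpow_mul r s).differentiableAt

theorem contDiff_rpow_mul {n : ℕ∞} (r : ℝ) :
    ContDiff ℝ n (fun s ↦ s ^ r * expNegInvGlue s) := by
  apply contDiff_all_iff_nat.2 (fun m ↦ ?_) n
  induction m generalizing r with
  | zero => exact contDiff_zero.2 (differentiable_rpow_mul r).continuous
  | succ m ihm =>
    rw [show ((m + 1 : ℕ) : WithTop ℕ∞) = m + 1 from rfl]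
    refine contDiff_succ_iff_deriv.2 ⟨differentiable_rpow_mul r, by simp, ?_⟩
    rw [funext fun s ↦ (hasDerivAt_rpow_mul r s).deriv]
    exact ((ihm (r - 1)).const_smul r).add (ihm (r - 2))

end expNegInvGlue

theorem contDiff_ite_rpow_mul_exp_neg_div {E : Type*} [NormedAddCommGroup E]
    [NormedSpace ℝ E] {n : ℕ∞} {c : E → ℝ} (hc : ContDiff ℝ n c)
    (hc_pos : ∀ x, 0 < c x) (r : ℝ) :
    ContDiff ℝ n (fun p : ℝ × E ↦ if 0 < p.1 then p.1 ^ r * exp (-c p.2 / p.1) else 0) := by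
  have hc' : ContDiff ℝ n (fun p : ℝ × E ↦ c p.2) := hc.comp contDiff_snd
  have hc_ne : ∀ p : ℝ × E, c p.2 ≠ 0 := fun p ↦ (hc_pos p.2).ne'
  have h : ContDiff ℝ n (fun p : ℝ × E ↦
      c p.2 ^ r * ((p.1 / c p.2) ^ r * expNegInvGlue (p.1 / c p.2))) :=
    (hc'.rpow_const_of_ne hc_ne).mul
      ((expNegInvGlue.contDiff_rpow_mul r).comp (contDiff_fst.div hc' hc_ne))
  convert h using 1
  funext ⟨t, x⟩
  have hcx := hc_pos x
  split_ifs with ht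
  · rw [expNegInvGlue, if_neg (div_pos ht hcx).not_ge, div_rpow ht.le hcx.le, inv_div,
      neg_div]
    field_simp
  · simp [expNegInvGlue.zero_of_nonpos (div_nonpos_of_nonpos_of_nonneg (not_lt.1 ht) hcx.le)]

theorem iteratedFDeriv_eq_zero_of_mem_closure {𝕜 E F : Type*} [NontriviallyNormedField 𝕜]
    [NormedAddCommGroup E] [NormedSpace 𝕜 E] [NormedAddCommGroup F] [NormedSpace 𝕜 F]
    {f : E → F} {k : ℕ} (hf : ContDiff 𝕜 k f) {U : Set E} (hU : IsOpen U) (hf0 : EqOn f 0 U)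
    {p : E} (hp : p ∈ closure U) : iteratedFDeriv 𝕜 k f p = 0 := by
  have hU0 : EqOn (iteratedFDeriv 𝕜 k f) 0 U := fun q hq ↦ by
    simpa using ((hf0.eventuallyEq_of_mem (hU.mem_nhds hq)).iteratedFDeriv 𝕜 k).eq_of_nhds
  exact hU0.closure (hf.continuous_iteratedFDeriv le_rfl) continuous_const hp

theorem contDiff_profileU {m : ℕ∞} (n : ℕ) (α β γ κ : ℝ) (hγ : 0 < γ) :
    ContDiff ℝ m (profileU n α β γ κ) := by
  have hbase : ∀ x : EuclideanSpace ℝ (Fin n), 1 + ‖x‖ ^ 2 ≠ 0 := fun x ↦ by positivity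
  have hc : ContDiff ℝ m (fun x : EuclideanSpace ℝ (Fin n) ↦ γ * (1 + ‖x‖ ^ 2) ^ (α / 2)) :=
    contDiff_const.mul ((contDiff_const.add (contDiff_norm_sq ℝ)).rpow_const_of_ne hbase)
  have hprofile : profileU n α β γ κ = fun p ↦ κ * if 0 < p.1 then
      p.1 ^ (-β) * exp (-(γ * (1 + ‖p.2‖ ^ 2) ^ (α / 2)) / p.1) else 0 := by
    funext p
    simp only [profileU, neg_mul, mul_ite, mul_zero, mul_assoc]
  rw [hprofile]
  exact contDiff_const.mul (contDiff_ite_rpow_mul_exp_neg_div hc (fun x ↦ by positivity) (-β))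

theorem profileU_smooth_general (n : ℕ) (α β γ κ : ℝ) (hγ : 0 < γ) :
    ContDiff ℝ (⊤ : ℕ∞) (profileU n α β γ κ) ∧
    (∀ p : Sp n, p.1 ≤ 0 → profileU n α β γ κ p = 0) ∧
    (∀ k : ℕ, ∀ p : Sp n, p.1 ≤ 0 → iteratedFDeriv ℝ k (profileU n α β γ κ) p = 0) := by
  have hzero : ∀ p : Sp n, p.1 ≤ 0 → profileU n α β γ κ p = 0 := fun p hp ↦ if_neg hp.not_gt
  refine ⟨contDiff_profileU n α β γ κ hγ, hzero, fun k p hp ↦ ?_⟩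
  have hclosure : closure (Iio (0 : ℝ) ×ˢ (univ : Set (EuclideanSpace ℝ (Fin n)))) =
      Iic 0 ×ˢ univ := by
    rw [closure_prod_eq, closure_Iio, closure_univ]
  exact iteratedFDeriv_eq_zero_of_mem_closure (contDiff_profileU n α β γ κ hγ)
    (isOpen_Iio.prod isOpen_univ) (fun q hq ↦ hzero q (le_of_lt hq.1))
    (hclosure ▸ ⟨hp, trivial⟩)

/-- **Smoothness of the Example 2 profile**: the piecewise-defined function is `C^∞` on all
of `ℝ × ℝⁿ`, and it vanishes together with all of its derivatives on `{t ≤ 0}`. -/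
theorem profileU_smooth (n : ℕ) (hn : 1 ≤ n) (α β γ κ : ℝ)
    (hα : 0 < α) (hβ : 0 < β) (hγ : 0 < γ) (hκ : 0 < κ) :
    ContDiff ℝ (⊤ : ℕ∞) (profileU n α β γ κ) ∧
    (∀ p : Sp n, p.1 ≤ 0 → profileU n α β γ κ p = 0) ∧
    (∀ k : ℕ, ∀ p : Sp n, p.1 ≤ 0 → iteratedFDeriv ℝ k (profileU n α β γ κ) p = 0) :=
  profileU_smooth_general n α β γ κ hγ
end
end

section
/- Differential identity for the Example 2 profile: Let n ≥ 1 and α, β, γ, κ > 0. Set u(t,x) = κ t^{−β} ℰ(t,x) with ℰ(t,x) = exp(−γ(1+|x|²)^{α/2}/t), and let a_{ij}(t,x) = (1+|x|²)^{(2−α)/2} δ_{ij}. Then for every t > 0 and x ∈ ℝⁿ: u_t − Σ_{i=1}^n ∂_{x_i}(a_{ii} ∂_{x_i}u) = (ακnγ − κβ)·t^{−β−1}·ℰ(t,x) + (κγ − α²κγ²·|x|²/(1+|x|²))·t^{−β−2}·(1+|x|²)^{α/2}·ℰ(t,x). -/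
open MeasureTheory

noncomputable section

/-- `ℰ(t,x) = exp(−γ(1+|x|²)^{α/2}/t)`. -/
def profileE (n : ℕ) (α γ : ℝ) (p : Sp n) : ℝ :=
  Real.exp (-γ * (1 + ‖p.2‖ ^ 2) ^ (α / 2) / p.1)

/-- `u(t,x) = κ t^{−β} ℰ(t,x)` (the Example 2 profile for `t > 0`). -/
def profileUPos (n : ℕ) (α β γ κ : ℝ) (p : Sp n) : ℝ :=
  κ * p.1 ^ (-β) * profileE n α γ p

/-- The diagonal coefficient `a_{ii}(t,x) = (1+|x|²)^{(2−α)/2}`. -/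
def coefDiag (n : ℕ) (α : ℝ) (p : Sp n) : ℝ :=
  (1 + ‖p.2‖ ^ 2) ^ ((2 - α) / 2)

/-! With `W = 1 + |x|²`, every partial derivative of `u` is read off from the Fréchet derivative
of `ℰ = exp(−γ W^{α/2}/t)`. Since `W^{(2−α)/2} W^{α/2−1} = 1`, the flux `a_{ii} ∂_{x_i} u` is
simply `−αγκ t^{−β−1} x_i ℰ` near any point with `t ≠ 0`, so its `x_i`-derivative needs one more
product rule, and summing the resulting `x_i²` over `i` gives `|x|²`. -/

open ContinuousLinearMap

theorem hasFDerivAt_one_add_norm_sq_rpow {F : Type*} [NormedAddCommGroup F]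
    [InnerProductSpace ℝ F] (s : ℝ) (x : F) :
    HasFDerivAt (fun y : F => (1 + ‖y‖ ^ 2) ^ s)
      ((2 * s * (1 + ‖x‖ ^ 2) ^ (s - 1)) • innerSL ℝ x) x := by
  have h := ((hasStrictFDerivAt_norm_sq x).hasFDerivAt.const_add 1).rpow_const (p := s)
    (Or.inl (by positivity))
  refine h.congr_fderiv (ContinuousLinearMap.ext fun v => ?_)
  simp only [smul_apply, smul_eq_mul, nsmul_eq_mul]
  push_cast
  ring

section Profile

variable {n : ℕ}

theorem hasFDerivAt_const_mul_fst_rpow (c a : ℝ) {q : Sp n} (ht : q.1 ≠ 0) :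
    HasFDerivAt (fun q : Sp n => c * q.1 ^ a)
      ((c * a * q.1 ^ (a - 1)) • fst ℝ ℝ (EuclideanSpace ℝ (Fin n))) q := by
  have h : HasFDerivAt (fun q : Sp n => q.1 ^ a)
      ((a * q.1 ^ (a - 1)) • fst ℝ ℝ (EuclideanSpace ℝ (Fin n))) q :=
    (Real.hasDerivAt_rpow_const (Or.inl ht)).comp_hasFDerivAt q hasFDerivAt_fst
  simpa only [smul_smul, mul_assoc] using h.const_mul c

theorem hasFDerivAt_profileE (α γ : ℝ) {q : Sp n} (ht : q.1 ≠ 0) :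
    HasFDerivAt (profileE n α γ)
      (profileE n α γ q •
        ((γ * (1 + ‖q.2‖ ^ 2) ^ (α / 2) / q.1 ^ 2) • fst ℝ ℝ (EuclideanSpace ℝ (Fin n)) -
          (α * γ * (1 + ‖q.2‖ ^ 2) ^ (α / 2 - 1) / q.1) •
            (innerSL ℝ q.2).comp (snd ℝ ℝ (EuclideanSpace ℝ (Fin n))))) q := by
  have hW : HasFDerivAt (fun q : Sp n => (1 + ‖q.2‖ ^ 2) ^ (α / 2)) _ q :=
    (hasFDerivAt_one_add_norm_sq_rpow (α / 2) q.2).comp q hasFDerivAt_snd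
  have hInv : HasFDerivAt (fun q : Sp n => q.1⁻¹) _ q :=
    (hasDerivAt_inv ht).comp_hasFDerivAt q (hasFDerivAt_fst (𝕜 := ℝ))
  have h := ((hW.const_mul (-γ)).fun_mul hInv).exp
  simp only [← div_eq_mul_inv] at h
  refine h.congr_fderiv (ContinuousLinearMap.ext fun v => ?_)
  simp only [smul_apply, comp_apply, add_apply, sub_apply, smul_eq_mul, coe_fst', coe_snd',
    profileE]
  field_simp
  ring

theorem hasFDerivAt_profileUPos (α β γ κ : ℝ) {q : Sp n} (ht : q.1 ≠ 0) :
    HasFDerivAt (profileUPos n α β γ κ)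
      ((κ * q.1 ^ (-β)) • (profileE n α γ q •
        ((γ * (1 + ‖q.2‖ ^ 2) ^ (α / 2) / q.1 ^ 2) • fst ℝ ℝ (EuclideanSpace ℝ (Fin n)) -
          (α * γ * (1 + ‖q.2‖ ^ 2) ^ (α / 2 - 1) / q.1) •
            (innerSL ℝ q.2).comp (snd ℝ ℝ (EuclideanSpace ℝ (Fin n))))) +
        profileE n α γ q • (κ * -β * q.1 ^ (-β - 1)) • fst ℝ ℝ (EuclideanSpace ℝ (Fin n))) q :=
  (hasFDerivAt_const_mul_fst_rpow κ (-β) ht).fun_mul (hasFDerivAt_profileE α γ ht)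

theorem pdt_profileUPos (α β γ κ : ℝ) {q : Sp n} (ht : q.1 ≠ 0) :
    pdt (profileUPos n α β γ κ) q =
      -(κ * β) * q.1 ^ (-β - 1) * profileE n α γ q +
        κ * γ * q.1 ^ (-β - 2) * (1 + ‖q.2‖ ^ 2) ^ (α / 2) * profileE n α γ q := by
  have h2 : q.1 ^ (-β - 2) = q.1 ^ (-β) / q.1 ^ 2 := by
    exact_mod_cast Real.rpow_sub_natCast ht (-β) 2
  rw [pdt, (hasFDerivAt_profileUPos α β γ κ ht).fderiv, h2]
  simp only [add_apply, smul_apply, sub_apply, comp_apply, coe_fst', coe_snd', coe_innerSL_apply,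
    inner_zero_right, smul_eq_mul]
  ring

theorem pdx_profileUPos (α β γ κ : ℝ) (i : Fin n) {q : Sp n} (ht : q.1 ≠ 0) :
    pdx i (profileUPos n α β γ κ) q =
      -(α * γ * κ) * q.1 ^ (-β - 1) * (1 + ‖q.2‖ ^ 2) ^ (α / 2 - 1) * q.2 i *
        profileE n α γ q := by
  rw [pdx, (hasFDerivAt_profileUPos α β γ κ ht).fderiv, Real.rpow_sub_one ht]
  simp only [add_apply, smul_apply, sub_apply, comp_apply, coe_fst', coe_snd', coe_innerSL_apply,
    EuclideanSpace.inner_single_right, Real.ringHom_apply, smul_eq_mul]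
  ring

theorem coefDiag_mul_pdx_profileUPos (α β γ κ : ℝ) (i : Fin n) {q : Sp n} (ht : q.1 ≠ 0) :
    coefDiag n α q * pdx i (profileUPos n α β γ κ) q =
      -(α * γ * κ) * q.1 ^ (-β - 1) * (q.2 i * profileE n α γ q) := by
  have hW : (1 + ‖q.2‖ ^ 2) ^ ((2 - α) / 2) * (1 + ‖q.2‖ ^ 2) ^ (α / 2 - 1) = 1 := by
    rw [← Real.rpow_add (by positivity), show (2 - α) / 2 + (α / 2 - 1) = 0 by ring,
      Real.rpow_zero]
  rw [pdx_profileUPos α β γ κ i ht, coefDiag]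
  linear_combination (-(α * γ * κ) * q.1 ^ (-β - 1) * q.2 i * profileE n α γ q) * hW

theorem pdx_coefDiag_mul_pdx_profileUPos (α β γ κ : ℝ) (i : Fin n) {p : Sp n} (ht : p.1 ≠ 0) :
    pdx i (fun q => coefDiag n α q * pdx i (profileUPos n α β γ κ) q) p =
      -(α * γ * κ) * p.1 ^ (-β - 1) * profileE n α γ p +
        α ^ 2 * γ ^ 2 * κ * p.1 ^ (-β - 2) * (1 + ‖p.2‖ ^ 2) ^ (α / 2 - 1) *
          profileE n α γ p * p.2 i ^ 2 := by
  have hxi : HasFDerivAt (fun q : Sp n => q.2 i) _ p :=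
    ((EuclideanSpace.proj i).comp (snd ℝ ℝ (EuclideanSpace ℝ (Fin n)))).hasFDerivAt
  have h := (hasFDerivAt_const_mul_fst_rpow (-(α * γ * κ)) (-β - 1) ht).fun_mul
    (hxi.fun_mul (hasFDerivAt_profileE α γ ht))
  have hev : (fun q => coefDiag n α q * pdx i (profileUPos n α β γ κ) q) =ᶠ[nhds p]
      fun q => -(α * γ * κ) * q.1 ^ (-β - 1) * (q.2 i * profileE n α γ q) := by
    filter_upwards [(isOpen_ne_fun continuous_fst continuous_const).mem_nhds ht] with q hq
    exact coefDiag_mul_pdx_profileUPos α β γ κ i hq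
  rw [pdx, (h.congr_of_eventuallyEq hev).fderiv, show -β - 2 = -β - 1 - 1 by ring,
    Real.rpow_sub_one ht (-β - 1)]
  simp only [add_apply, smul_apply, sub_apply, comp_apply, coe_fst', coe_snd', coe_innerSL_apply,
    EuclideanSpace.inner_single_right, Real.ringHom_apply, PiLp.proj_apply, PiLp.single_eq_same,
    smul_eq_mul]
  ring

end Profile

theorem profileU_differential_identity_general (n : ℕ) (α β γ κ : ℝ) :
    ∀ p : Sp n, 0 < p.1 →
      pdt (profileUPos n α β γ κ) p -
        ∑ i : Fin n, pdx i (fun p' => coefDiag n α p' * pdx i (profileUPos n α β γ κ) p') p =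
      (α * κ * n * γ - κ * β) * p.1 ^ (-β - 1) * profileE n α γ p +
      (κ * γ - α ^ 2 * κ * γ ^ 2 * (‖p.2‖ ^ 2 / (1 + ‖p.2‖ ^ 2))) *
        p.1 ^ (-β - 2) * (1 + ‖p.2‖ ^ 2) ^ (α / 2) * profileE n α γ p := by
  intro p ht
  simp only [pdt_profileUPos α β γ κ ht.ne', pdx_coefDiag_mul_pdx_profileUPos α β γ κ _ ht.ne',
    Finset.sum_add_distrib, ← Finset.mul_sum, ← EuclideanSpace.real_norm_sq_eq,
    Finset.sum_const, Finset.card_univ, Fintype.card_fin, nsmul_eq_mul]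
  have hW : 1 + ‖p.2‖ ^ 2 ≠ 0 := by positivity
  rw [Real.rpow_sub_one hW]
  field_simp
  ring

/-- **Differential identity for the Example 2 profile**: for `t > 0`,
`u_t − Σᵢ ∂_{x_i}(a_{ii} ∂_{x_i}u)
  = (ακnγ − κβ) t^{−β−1} ℰ + (κγ − α²κγ²|x|²/(1+|x|²)) t^{−β−2} (1+|x|²)^{α/2} ℰ`. -/
theorem profileU_differential_identity (n : ℕ) (hn : 1 ≤ n) (α β γ κ : ℝ)
    (hα : 0 < α) (hβ : 0 < β) (hγ : 0 < γ) (hκ : 0 < κ) :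
    ∀ p : Sp n, 0 < p.1 →
      pdt (profileUPos n α β γ κ) p -
        ∑ i : Fin n, pdx i (fun p' => coefDiag n α p' * pdx i (profileUPos n α β γ κ) p') p =
      (α * κ * n * γ - κ * β) * p.1 ^ (-β - 1) * profileE n α γ p +
      (κ * γ - α ^ 2 * κ * γ ^ 2 * (‖p.2‖ ^ 2 / (1 + ‖p.2‖ ^ 2))) *
        p.1 ^ (-β - 2) * (1 + ‖p.2‖ ^ 2) ^ (α / 2) * profileE n α γ p :=
  profileU_differential_identity_general n α β γ κ
end
end

section
/- Key pointwise inequality (12) under the parameter conditions (13): Let n ≥ 1, α > 0 and q > 1 + α/n. Let β = 1/(q−1), let γ satisfy 1/(αn(q−1)) < γ ≤ 1/α², and let κ satisfy 0 < κ ≤ (αn(γ − 1/(αn(q−1))))^{1/(q−1)}. Then for all t > 0 and all x ∈ ℝⁿ, writing ℰ(t,x) = exp(−γ(1+|x|²)^{α/2}/t): (ακnγ − κβ)·t^{−β−1}·ℰ(t,x) + (κγ − α²κγ²·|x|²/(1+|x|²))·t^{−β−2}·(1+|x|²)^{α/2}·ℰ(t,x) ≥ κ^q·t^{−βq}·ℰ(t,x)^q.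 -/
open MeasureTheory

noncomputable section

/-- **Key pointwise inequality (12) under the parameter conditions (13)**. -/
theorem key_pointwise_inequality (n : ℕ) (hn : 1 ≤ n) (α q β γ κ : ℝ)
    (hα : 0 < α) (hq : 1 + α / n < q)
    (hβ : β = 1 / (q - 1))
    (hγl : 1 / (α * n * (q - 1)) < γ) (hγu : γ ≤ 1 / α ^ 2)
    (hκl : 0 < κ) (hκu : κ ≤ (α * n * (γ - 1 / (α * n * (q - 1)))) ^ (1 / (q - 1))) :
    ∀ p : Sp n, 0 < p.1 →
      κ ^ q * p.1 ^ (-β * q) * profileE n α γ p ^ q ≤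
      (α * κ * n * γ - κ * β) * p.1 ^ (-β - 1) * profileE n α γ p +
      (κ * γ - α ^ 2 * κ * γ ^ 2 * (‖p.2‖ ^ 2 / (1 + ‖p.2‖ ^ 2))) *
        p.1 ^ (-β - 2) * (1 + ‖p.2‖ ^ 2) ^ (α / 2) * profileE n α γ p := by
  intro p hp
  have hn0 : (0:ℝ) < n := by exact_mod_cast Nat.lt_of_lt_of_le Nat.zero_lt_one hn
  have hq1 : 1 < q := by
    have : 0 < α / n := div_pos hα hn0
    linarith
  have hqm : 0 < q - 1 := by linarith
  have hγ0 : 0 < γ := lt_trans (by positivity) hγl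
  set s : ℝ := 1 + ‖p.2‖ ^ 2 with hs
  have hs1 : (1:ℝ) ≤ s := by nlinarith [sq_nonneg ‖p.2‖]
  have hs0 : (0:ℝ) < s := lt_of_lt_of_le one_pos hs1
  set E : ℝ := profileE n α γ p with hE
  have hE0 : 0 < E := Real.exp_pos _
  have hE1 : E ≤ 1 := by
    rw [hE, profileE]
    apply Real.exp_le_one_iff.mpr
    apply div_nonpos_of_nonpos_of_nonneg _ hp.le
    have : 0 ≤ (s : ℝ) ^ (α / 2) := Real.rpow_nonneg hs0.le _
    nlinarith
  have hEq : E ^ q ≤ E := by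
    have := Real.rpow_le_rpow_of_exponent_ge hE0 hE1 hq1.le
    simpa using this
  -- κ^q ≤ κ * (α n γ - β)
  have hC : α * n * (γ - 1 / (α * n * (q - 1))) = α * n * γ - β := by
    rw [hβ]; field_simp
  have hβpos : 0 < β := by rw [hβ]; positivity
  have hCpos : 0 < α * n * γ - β := by
    rw [← hC]
    have : 0 < γ - 1 / (α * n * (q - 1)) := by linarith
    positivity
  have hκq : κ ^ q ≤ κ * (α * n * γ - β) := by
    have h1 : κ ^ (q - 1) ≤ α * n * γ - β := by
      calc κ ^ (q - 1) ≤ ((α * n * (γ - 1 / (α * n * (q - 1)))) ^ (1 / (q - 1))) ^ (q - 1) :=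
            Real.rpow_le_rpow hκl.le hκu hqm.le
        _ = α * n * (γ - 1 / (α * n * (q - 1))) := by
            rw [← Real.rpow_mul (by rw [hC]; exact hCpos.le), one_div_mul_cancel hqm.ne',
              Real.rpow_one]
        _ = α * n * γ - β := hC
    calc κ ^ q = κ ^ (q - 1) * κ := by
          rw [Real.rpow_sub hκl, Real.rpow_one, div_mul_cancel₀ _ hκl.ne']
      _ ≤ (α * n * γ - β) * κ := by
          exact mul_le_mul_of_nonneg_right h1 hκl.le
      _ = κ * (α * n * γ - β) := by ring
  have hexp : -β * q = -β - 1 := by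
    have : β * (q - 1) = 1 := by rw [hβ]; field_simp
    nlinarith
  have hT2 : 0 ≤ (κ * γ - α ^ 2 * κ * γ ^ 2 * (‖p.2‖ ^ 2 / s)) *
      p.1 ^ (-β - 2) * s ^ (α / 2) * E := by
    have hr : ‖p.2‖ ^ 2 / s ≤ 1 := by
      rw [div_le_one hs0]; nlinarith
    have hr0 : 0 ≤ ‖p.2‖ ^ 2 / s := by positivity
    have hαγ : α ^ 2 * γ ≤ 1 := by
      rw [le_div_iff₀ (by positivity)] at hγu; linarith
    have hcoef : 0 ≤ κ * γ - α ^ 2 * κ * γ ^ 2 * (‖p.2‖ ^ 2 / s) := by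
      have h4 : α ^ 2 * γ * (‖p.2‖ ^ 2 / s) ≤ 1 := by
        calc α ^ 2 * γ * (‖p.2‖ ^ 2 / s) ≤ 1 * 1 :=
              mul_le_mul hαγ hr hr0 zero_le_one
          _ = 1 := one_mul 1
      have h5 : κ * γ - α ^ 2 * κ * γ ^ 2 * (‖p.2‖ ^ 2 / s) =
          κ * γ * (1 - α ^ 2 * γ * (‖p.2‖ ^ 2 / s)) := by ring
      rw [h5]
      exact mul_nonneg (mul_nonneg hκl.le hγ0.le) (by linarith)
    have h1 : 0 ≤ p.1 ^ (-β - 2) := Real.rpow_nonneg hp.le _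
    have h2 : 0 ≤ s ^ (α / 2) := Real.rpow_nonneg hs0.le _
    exact mul_nonneg (mul_nonneg (mul_nonneg hcoef h1) h2) hE0.le
  have hT1 : κ ^ q * p.1 ^ (-β * q) * E ^ q ≤
      (α * κ * n * γ - κ * β) * p.1 ^ (-β - 1) * E := by
    rw [hexp]
    have ht : 0 ≤ p.1 ^ (-β - 1) := Real.rpow_nonneg hp.le _
    have hκq0 : 0 ≤ κ ^ q := Real.rpow_nonneg hκl.le _
    calc κ ^ q * p.1 ^ (-β - 1) * E ^ q ≤ κ ^ q * p.1 ^ (-β - 1) * E := by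
          exact mul_le_mul_of_nonneg_left hEq
            (mul_nonneg (Real.rpow_nonneg hκl.le _) ht)
      _ ≤ (κ * (α * n * γ - β)) * p.1 ^ (-β - 1) * E := by
          apply mul_le_mul_of_nonneg_right
            (mul_le_mul_of_nonneg_right hκq ht) hE0.le
      _ = (α * κ * n * γ - κ * β) * p.1 ^ (-β - 1) * E := by ring
  linarith
end
end

section
/- Combined sharpness statement: Let n ≥ 1, let α be any real number, and let q satisfy q > 1 and q > 1 + α/n. Then there exist measurable, locally bounded, symmetric coefficients a_{ij} on ℝ × ℝⁿ with 0 ≤ Σ_{i,j} a_{ij}(t,x)ξ_iξ_j for all ξ ∈ ℝⁿ, satisfying condition (8) with exponent α and some constant c > 0, and a C^∞ function u on ℝ × ℝⁿ which is nonnegative, not identically zero, and satisfies u_t(t,x) ≥ Σ_{i,j} ∂_{x_i}(a_{ij} ∂_{x_j}u)(t,x) + |u(t,x)|^{q−1}u(t,x) at every point (t,x) ∈ ℝ × ℝⁿ. Hence the restriction q ≤ 1 + α/n in Theorems 1–3 cannot be relaxed (for q > 1). -/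
open MeasureTheory

noncomputable section

/-!
Take `a_{ij} = (1 + |x|²)^{(2-β)/2} δ_{ij}` with `α ≤ β`, `0 < β < n(q-1)`, and, for `t > 0`,
`u = κ (1 + t²)^{-m/2} exp(-γ (1 + |x|²)^{β/2} / t)` with `m = 1/(q-1)`, `γ = β⁻²`;
`u` vanishes to infinite order at `t = 0` (it is built from `expNegInvGlue`) and is `0` for `t ≤ 0`.
The weight cancels the power of `1 + |x|²` in `∇u`, so the flux `a ∇u = -(γβ/t) u x` is radial and
`div (a ∇u) = ((γβ/t)² (1 + |x|²)^{β/2-1} |x|² - nγβ/t) u`,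
while `u_t = (γ (1 + |x|²)^{β/2}/t² - mt/(1+t²)) u`.
Since `(1 + t²)^{-m(q-1)/2} ≤ 1/t`, the reaction term is at most `κ^{q-1}/t · u`; choosing
`κ^{q-1} = nγβ - m`, which is positive exactly because `β < n(q-1)`, leaves `-m/t ≤ -mt/(1+t²)`
among the `1/t` terms, and `γβ² ≤ 1` controls the `1/t²` terms.
For `t ≤ 0` every point is a minimum of `u ≥ 0`, so all derivatives vanish there.
-/

open Real
open scoped ContDiff

section PartialDerivatives

variable {n : ℕ} {f : Sp n → ℝ} {p : Sp n} {d : ℝ}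

lemma hasDerivAt_add_smul_single (x : EuclideanSpace ℝ (Fin n)) (j : Fin n) :
    HasDerivAt (fun s : ℝ => x + s • EuclideanSpace.single j (1 : ℝ))
      (EuclideanSpace.single j 1) 0 :=
  ((hasDerivAt_id (0 : ℝ)).smul_const _).const_add x |>.congr_deriv (one_smul _ _)

lemma pdt_eq_of_hasDerivAt (hf : DifferentiableAt ℝ f p)
    (h : HasDerivAt (fun s => f (s, p.2)) d p.1) : pdt f p = d := by
  have hcurve : HasDerivAt (fun s : ℝ => (s, p.2)) ((1 : ℝ), (0 : EuclideanSpace ℝ (Fin n))) p.1 :=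
    (hasDerivAt_id p.1).prodMk (hasDerivAt_const _ _)
  exact (h.unique (hf.hasFDerivAt.comp_hasDerivAt p.1 hcurve)).symm

lemma pdx_eq_of_hasDerivAt {j : Fin n} (hf : DifferentiableAt ℝ f p)
    (h : HasDerivAt (fun s : ℝ => f (p.1, p.2 + s • EuclideanSpace.single j (1 : ℝ))) d 0) :
    pdx j f p = d := by
  have hcurve : HasDerivAt (fun s : ℝ => (p.1, p.2 + s • EuclideanSpace.single j (1 : ℝ)))
      ((0 : ℝ), EuclideanSpace.single j (1 : ℝ)) 0 :=
    (hasDerivAt_const _ _).prodMk (hasDerivAt_add_smul_single p.2 j)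
  have hf' : HasFDerivAt f (fderiv ℝ f p)
      (p.1, p.2 + (0 : ℝ) • EuclideanSpace.single j (1 : ℝ)) := by
    simpa using hf.hasFDerivAt
  exact (h.unique (hf'.comp_hasDerivAt 0 hcurve)).symm

lemma pdx_eq_zero_of_slice_eq_zero (j : Fin n) (h : ∀ y, f (p.1, y) = 0) : pdx j f p = 0 := by
  by_cases hf : DifferentiableAt ℝ f p
  · exact pdx_eq_of_hasDerivAt hf (by simpa only [h] using hasDerivAt_const (0 : ℝ) (0 : ℝ))
  · simp [pdx, fderiv_zero_of_not_differentiableAt hf]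

lemma fderiv_eq_zero_of_nonneg_of_eq_zero (hf : ∀ p', 0 ≤ f p') (hp : f p = 0) :
    fderiv ℝ f p = 0 :=
  IsLocalMin.fderiv_eq_zero (Filter.Eventually.of_forall fun p' => hp ▸ hf p')

lemma ContDiff.pdx (hf : ContDiff ℝ ∞ f) (j : Fin n) : ContDiff ℝ ∞ (pdx j f) :=
  (hf.fderiv_right (by simp)).clm_apply contDiff_const

end PartialDerivatives

section Radial

variable {n : ℕ}

lemma hasDerivAt_norm_sq_add_smul_single (x : EuclideanSpace ℝ (Fin n)) (j : Fin n) :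
    HasDerivAt (fun s : ℝ => ‖x + s • EuclideanSpace.single j (1 : ℝ)‖ ^ 2) (2 * x j) 0 := by
  simpa [EuclideanSpace.inner_single_right] using (hasDerivAt_add_smul_single x j).norm_sq

variable {f : Sp n → ℝ} {p : Sp n} {φ : ℝ → ℝ} {d : ℝ}

lemma pdx_of_slice_eq_radial (hf : DifferentiableAt ℝ f p)
    (hslice : ∀ y, f (p.1, y) = φ (‖y‖ ^ 2)) (hφ : HasDerivAt φ d (‖p.2‖ ^ 2)) (j : Fin n) :
    pdx j f p = 2 * d * p.2 j := by
  refine pdx_eq_of_hasDerivAt hf ?_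
  simp only [hslice]
  have hφ' : HasDerivAt φ d (‖p.2 + (0 : ℝ) • EuclideanSpace.single j (1 : ℝ)‖ ^ 2) := by
    simpa using hφ
  exact (hφ'.comp 0 (hasDerivAt_norm_sq_add_smul_single p.2 j)).congr_deriv (by ring)

lemma pdx_of_slice_eq_radial_mul_coord {j : Fin n} (hf : DifferentiableAt ℝ f p)
    (hslice : ∀ y, f (p.1, y) = φ (‖y‖ ^ 2) * y j) (hφ : HasDerivAt φ d (‖p.2‖ ^ 2)) :
    pdx j f p = 2 * d * p.2 j ^ 2 + φ (‖p.2‖ ^ 2) := by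
  refine pdx_eq_of_hasDerivAt hf ?_
  simp only [hslice]
  have hφ' : HasDerivAt φ d (‖p.2 + (0 : ℝ) • EuclideanSpace.single j (1 : ℝ)‖ ^ 2) := by
    simpa using hφ
  have hcoord : HasDerivAt (fun s : ℝ => (p.2 + s • EuclideanSpace.single j (1 : ℝ)) j) 1 0 := by
    simpa using (hasDerivAt_id (0 : ℝ)).const_add (p.2 j)
  exact ((hφ'.comp 0 (hasDerivAt_norm_sq_add_smul_single p.2 j)).mul hcoord).congr_deriv
    (by simp only [Function.comp_apply, zero_smul, add_zero]; ring)

lemma sum_pdx_of_slice_eq_radial_field {F : Fin n → Sp n → ℝ}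
    (hF : ∀ j, DifferentiableAt ℝ (F j) p) (hslice : ∀ j y, F j (p.1, y) = φ (‖y‖ ^ 2) * y j)
    (hφ : HasDerivAt φ d (‖p.2‖ ^ 2)) :
    ∑ j, pdx j (F j) p = 2 * d * ‖p.2‖ ^ 2 + n * φ (‖p.2‖ ^ 2) := by
  rw [Finset.sum_congr rfl fun j _ => pdx_of_slice_eq_radial_mul_coord (hF j) (hslice j) hφ,
    Finset.sum_add_distrib, ← Finset.mul_sum, ← EuclideanSpace.real_norm_sq_eq]
  simp

end Radial

section Coefficients

variable {n : ℕ}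

def diagCoeffs (A : Sp n → ℝ) : Fin n → Fin n → Sp n → ℝ :=
  fun i j p => if i = j then A p else 0

variable {A : Sp n → ℝ}

lemma continuous_diagCoeffs (hA : Continuous A) (i j : Fin n) : Continuous (diagCoeffs A i j) := by
  unfold diagCoeffs
  split_ifs
  exacts [hA, continuous_const]

lemma sum_diagCoeffs_mul_mul (p : Sp n) (ξ : Fin n → ℝ) :
    ∑ i, ∑ j, diagCoeffs A i j p * ξ i * ξ j = A p * ∑ i, ξ i ^ 2 := by
  simp [diagCoeffs, Finset.mul_sum, sq, mul_assoc]

lemma coeffs_diagCoeffs (hA : Continuous A) (hA0 : ∀ p, 0 ≤ A p) : Coeffs n (diagCoeffs A) A where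
  meas i j := (continuous_diagCoeffs hA i j).measurable
  locBdd i j _ hK := hK.exists_bound_of_continuousOn (continuous_diagCoeffs hA i j).continuousOn
  symm := Filter.Eventually.of_forall fun p i j => by simp [diagCoeffs, eq_comm]
  measA := hA.measurable
  nonnegA := hA0
  locBddA _ hK := (hK.exists_bound_of_continuousOn hA.continuousOn).imp
    fun _ hC p hp => (le_abs_self _).trans (hC p hp)
  quad := Filter.Eventually.of_forall fun p ξ => by
    rw [sum_diagCoeffs_mul_mul]
    exact ⟨mul_nonneg (hA0 p) (Finset.sum_nonneg fun i _ => sq_nonneg _), le_rfl⟩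

lemma sum_pdx_diagCoeffs_mul (g : Fin n → Sp n → ℝ) (p : Sp n) :
    ∑ i, ∑ j, pdx i (fun p' => diagCoeffs A i j p' * g j p') p
      = ∑ i, pdx i (fun p' => A p' * g i p') p := by
  refine Finset.sum_congr rfl fun i _ => ?_
  rw [Finset.sum_eq_single i]
  · simp [diagCoeffs]
  · intro j _ hji
    simp [diagCoeffs, Ne.symm hji, pdx]
  · simp

end Coefficients

section Weight

variable {n : ℕ}

def radialWeight (e : ℝ) (p : Sp n) : ℝ := (1 + ‖p.2‖ ^ 2) ^ e

lemma radialWeight_pos (e : ℝ) (p : Sp n) : 0 < radialWeight e p := by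
  unfold radialWeight; positivity

lemma contDiff_radialWeight (e : ℝ) {k : WithTop ℕ∞} : ContDiff ℝ k (radialWeight (n := n) e) :=
  ((contDiff_const.add (contDiff_norm_sq ℝ)).comp contDiff_snd).rpow_const_of_ne
    fun p => (by positivity : (0 : ℝ) < 1 + ‖p.2‖ ^ 2).ne'

lemma rpow_le_add_rpow_of_mem_Icc {a b s : ℝ} (ha : 0 < a) (hs : s ∈ Set.Icc a b) (e : ℝ) :
    s ^ e ≤ a ^ e + b ^ e := by
  have hb : 0 < b := ha.trans_le (hs.1.trans hs.2)
  rcases le_total 0 e with he | he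
  · linarith [rpow_le_rpow (ha.le.trans hs.1) hs.2 he, rpow_pos_of_pos ha e]
  · linarith [rpow_le_rpow_of_nonpos ha hs.1 he, rpow_pos_of_pos hb e]

lemma cond8_radialWeight {α β : ℝ} (hαβ : α ≤ β) :
    Cond8 (radialWeight (n := n) ((2 - β) / 2)) α
      ((1 / 4) ^ ((2 - β) / 2) + 2 ^ ((2 - β) / 2)) := by
  intro R hR
  refine Filter.Eventually.of_forall fun p ⟨hlow, hupp⟩ => ?_
  have hR0 : 0 < R := by linarith
  set s := (1 + ‖p.2‖ ^ 2) / R ^ 2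
  have hs : s ∈ Set.Icc (1 / 4) 2 := by
    have hx := norm_nonneg p.2
    constructor
    · rw [le_div_iff₀ (by positivity)]; nlinarith
    · rw [div_le_iff₀ (by positivity)]; nlinarith
  calc radialWeight ((2 - β) / 2) p = (s * R ^ 2) ^ ((2 - β) / 2) := by
        rw [radialWeight, div_mul_cancel₀ _ (by positivity)]
    _ = s ^ ((2 - β) / 2) * R ^ (2 - β) := by
        rw [mul_rpow (hs.1.trans' (by norm_num)) (by positivity), ← rpow_natCast,
          ← rpow_mul hR0.le]
        congr 2
        push_cast
        ring
    _ ≤ ((1 / 4) ^ ((2 - β) / 2) + 2 ^ ((2 - β) / 2)) * R ^ (2 - α) :=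
        mul_le_mul (rpow_le_add_rpow_of_mem_Icc (by norm_num) hs _)
          (rpow_le_rpow_of_exponent_le hR.le (by linarith)) (by positivity) (by positivity)

end Weight

section Supersolution

variable {n : ℕ} {β γ m κ : ℝ}

def timeDecay (m t : ℝ) : ℝ := (1 + t ^ 2) ^ (-(m / 2))

def supersolution (β γ m κ : ℝ) (p : Sp n) : ℝ :=
  κ * timeDecay m p.1 * expNegInvGlue (p.1 / (γ * radialWeight (β / 2) p))

def supersolutionProfile (β γ m κ t r : ℝ) : ℝ :=
  κ * timeDecay m t * exp (-(γ * (1 + r) ^ (β / 2)) / t)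

lemma timeDecay_pos (m t : ℝ) : 0 < timeDecay m t := by
  unfold timeDecay; positivity

lemma hasDerivAt_timeDecay (m t : ℝ) :
    HasDerivAt (timeDecay m) (-(m * t / (1 + t ^ 2)) * timeDecay m t) t := by
  have h := ((hasDerivAt_pow 2 t).const_add 1).rpow_const (p := -(m / 2))
    (Or.inl (by positivity : (1 + t ^ 2 : ℝ) ≠ 0))
  refine h.congr_deriv ?_
  rw [timeDecay, rpow_sub_one (by positivity)]
  field_simp
  ring

lemma timeDecay_rpow_le {q t : ℝ} (hm : m * (q - 1) = 1) (ht : 0 < t) :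
    timeDecay m t ^ (q - 1) ≤ t⁻¹ := by
  have hsqrt : t ≤ √(1 + t ^ 2) := le_sqrt_of_sq_le (by linarith)
  rw [timeDecay, ← rpow_mul (by positivity), show -(m / 2) * (q - 1) = -(1 / 2) by linarith,
    rpow_neg (by positivity), ← sqrt_eq_rpow]
  exact inv_anti₀ ht hsqrt

lemma supersolution_nonneg (hκ : 0 ≤ κ) (p : Sp n) : 0 ≤ supersolution β γ m κ p := by
  have := timeDecay_pos m p.1
  have := expNegInvGlue.nonneg (p.1 / (γ * radialWeight (β / 2) p))
  unfold supersolution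
  positivity

lemma supersolution_eq_zero_of_nonpos (hγ : 0 ≤ γ) {p : Sp n} (ht : p.1 ≤ 0) :
    supersolution β γ m κ p = 0 := by
  have := radialWeight_pos (β / 2) p
  rw [supersolution, expNegInvGlue.zero_of_nonpos
    (div_nonpos_of_nonpos_of_nonneg ht (by positivity)), mul_zero]

lemma supersolution_eq_profile (hγ : 0 < γ) {p : Sp n} (ht : 0 < p.1) :
    supersolution β γ m κ p = supersolutionProfile β γ m κ p.1 (‖p.2‖ ^ 2) := by
  have := radialWeight_pos (β / 2) p
  have hy : 0 < p.1 / (γ * radialWeight (β / 2) p) := by positivity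
  rw [supersolution, supersolutionProfile, expNegInvGlue, if_neg hy.not_ge, inv_div, neg_div]
  rfl

lemma supersolution_pos (hκ : 0 < κ) (hγ : 0 < γ) {p : Sp n} (ht : 0 < p.1) :
    0 < supersolution β γ m κ p := by
  have := timeDecay_pos m p.1
  rw [supersolution_eq_profile hγ ht, supersolutionProfile]
  positivity

lemma contDiff_supersolution (hγ : 0 < γ) : ContDiff ℝ ∞ (supersolution (n := n) β γ m κ) := by
  have hdecay : ContDiff ℝ ∞ (timeDecay m) :=
    (contDiff_const.add (contDiff_id.pow 2)).rpow_const_of_ne fun t => by positivity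
  have hy : ContDiff ℝ ∞ fun p : Sp n => p.1 / (γ * radialWeight (β / 2) p) :=
    contDiff_fst.div (contDiff_const.mul (contDiff_radialWeight _))
      fun p => (mul_pos hγ (radialWeight_pos _ p)).ne'
  exact (contDiff_const.mul (hdecay.comp contDiff_fst)).mul (expNegInvGlue.contDiff.comp hy)

lemma hasDerivAt_supersolutionProfile_snd (t : ℝ) {r : ℝ} (hr : -1 < r) :
    HasDerivAt (supersolutionProfile β γ m κ t)
      (-(γ * β * (1 + r) ^ (β / 2 - 1)) / (2 * t) * supersolutionProfile β γ m κ t r) r := by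
  have h := ((((hasDerivAt_id r).const_add 1).rpow_const (p := β / 2)
    (Or.inl (by simp only [id]; linarith))).const_mul γ).neg.div_const t |>.exp.const_mul
    (κ * timeDecay m t)
  refine h.congr_deriv ?_
  simp only [supersolutionProfile, id, Pi.neg_apply]
  field_simp

lemma hasDerivAt_supersolutionProfile_fst {t : ℝ} (ht : 0 < t) (r : ℝ) :
    HasDerivAt (fun s => supersolutionProfile β γ m κ s r)
      ((γ * (1 + r) ^ (β / 2) / t ^ 2 - m * t / (1 + t ^ 2))
        * supersolutionProfile β γ m κ t r) t := by
  have h := ((hasDerivAt_timeDecay m t).const_mul κ).mul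
    ((hasDerivAt_inv ht.ne').const_mul (-(γ * (1 + r) ^ (β / 2)))).exp
  refine h.congr_deriv ?_
  simp only [supersolutionProfile, div_eq_mul_inv]
  ring

end Supersolution

section Derivatives

variable {n : ℕ} {β γ m κ : ℝ} {p : Sp n}

lemma differentiable_supersolution (hγ : 0 < γ) :
    Differentiable ℝ (supersolution (n := n) β γ m κ) :=
  (contDiff_supersolution hγ).differentiable (by simp)

lemma pdt_supersolution (hγ : 0 < γ) (ht : 0 < p.1) :
    pdt (supersolution β γ m κ) p = (γ * (1 + ‖p.2‖ ^ 2) ^ (β / 2) / p.1 ^ 2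
      - m * p.1 / (1 + p.1 ^ 2)) * supersolution β γ m κ p := by
  refine pdt_eq_of_hasDerivAt (differentiable_supersolution hγ p) ?_
  rw [supersolution_eq_profile hγ ht]
  refine (hasDerivAt_supersolutionProfile_fst ht _).congr_of_eventuallyEq ?_
  filter_upwards [lt_mem_nhds ht] with s hs
  exact supersolution_eq_profile hγ (p := (s, p.2)) hs

lemma pdx_supersolution (hγ : 0 < γ) (ht : 0 < p.1) (j : Fin n) :
    pdx j (supersolution β γ m κ) p
      = -(γ * β * (1 + ‖p.2‖ ^ 2) ^ (β / 2 - 1)) / p.1 * p.2 j * supersolution β γ m κ p := by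
  rw [pdx_of_slice_eq_radial (differentiable_supersolution hγ p)
    (fun y => supersolution_eq_profile hγ (p := (p.1, y)) ht)
    (hasDerivAt_supersolutionProfile_snd p.1 (neg_one_lt_zero.trans_le (sq_nonneg _))),
    supersolution_eq_profile hγ ht]
  field_simp

lemma radialWeight_mul_pdx_supersolution (hγ : 0 < γ) (ht : 0 < p.1) (j : Fin n) :
    radialWeight ((2 - β) / 2) p * pdx j (supersolution β γ m κ) p
      = -(γ * β / p.1) * supersolution β γ m κ p * p.2 j := by
  have hcancel : (1 + ‖p.2‖ ^ 2) ^ ((2 - β) / 2) * (1 + ‖p.2‖ ^ 2) ^ (β / 2 - 1) = 1 := by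
    rw [← rpow_add (by positivity), show (2 - β) / 2 + (β / 2 - 1) = 0 by ring, rpow_zero]
  rw [pdx_supersolution hγ ht, radialWeight]
  linear_combination (-(γ * β) / p.1 * p.2 j * supersolution β γ m κ p) * hcancel

lemma sum_pdx_radialWeight_mul_pdx_supersolution (hγ : 0 < γ) (ht : 0 < p.1) :
    ∑ j, pdx j (fun p' => radialWeight ((2 - β) / 2) p' * pdx j (supersolution β γ m κ) p') p
      = ((γ * β / p.1) ^ 2 * (1 + ‖p.2‖ ^ 2) ^ (β / 2 - 1) * ‖p.2‖ ^ 2 - n * (γ * β / p.1))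
        * supersolution β γ m κ p := by
  have hflux : ∀ j, DifferentiableAt ℝ
      (fun p' => radialWeight ((2 - β) / 2) p' * pdx j (supersolution β γ m κ) p') p :=
    fun j => ((contDiff_radialWeight _).mul ((contDiff_supersolution hγ).pdx j)).differentiable
      (by simp) p
  rw [sum_pdx_of_slice_eq_radial_field
    (φ := fun r => -(γ * β / p.1) * supersolutionProfile β γ m κ p.1 r)
    hflux (fun j y => by
      rw [radialWeight_mul_pdx_supersolution hγ (p := (p.1, y)) ht,
        supersolution_eq_profile hγ (p := (p.1, y)) ht])
    ((hasDerivAt_supersolutionProfile_snd p.1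
      (neg_one_lt_zero.trans_le (sq_nonneg _))).const_mul _),
    supersolution_eq_profile hγ ht]
  field_simp
  ring

end Derivatives

section Inequality

variable {n : ℕ} {β γ m κ q : ℝ} {p : Sp n}

lemma rpow_sub_one_mul_le_rpow {r : ℝ} (hr : 0 ≤ r) (e : ℝ) :
    (1 + r) ^ (e - 1) * r ≤ (1 + r) ^ e := by
  rw [rpow_sub_one (by positivity), div_mul_eq_mul_div, div_le_iff₀ (by positivity)]
  exact mul_le_mul_of_nonneg_left (by linarith) (by positivity)

lemma nl_supersolution_le (hm : m * (q - 1) = 1) (hq : 1 < q) (hγ : 0 < γ) (hκ : 0 ≤ κ)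
    (ht : 0 < p.1) :
    nl q (supersolution β γ m κ p) ≤ κ ^ (q - 1) / p.1 * supersolution β γ m κ p := by
  have hu := supersolution_nonneg (β := β) (γ := γ) (m := m) hκ p
  rw [nl, abs_of_nonneg hu]
  refine mul_le_mul_of_nonneg_right ?_ hu
  have hexp : exp (-(γ * (1 + ‖p.2‖ ^ 2) ^ (β / 2)) / p.1) ≤ 1 :=
    exp_le_one_iff.2 (div_nonpos_of_nonpos_of_nonneg (neg_nonpos.2 (by positivity)) ht.le)
  rw [supersolution_eq_profile hγ ht, supersolutionProfile,
    mul_rpow (mul_nonneg hκ (timeDecay_pos _ _).le) (exp_pos _).le,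
    mul_rpow hκ (timeDecay_pos m p.1).le, div_eq_mul_inv]
  calc κ ^ (q - 1) * timeDecay m p.1 ^ (q - 1)
        * exp (-(γ * (1 + ‖p.2‖ ^ 2) ^ (β / 2)) / p.1) ^ (q - 1)
      ≤ κ ^ (q - 1) * p.1⁻¹ * 1 := by
        gcongr
        · exact timeDecay_rpow_le hm ht
        · exact rpow_le_one (exp_pos _).le hexp (by linarith)
    _ = κ ^ (q - 1) * p.1⁻¹ := mul_one _

lemma supersolution_inequality_of_pos (hm : m * (q - 1) = 1) (hq : 1 < q) (hγ : 0 < γ)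
    (hγβ : γ * β ^ 2 ≤ 1) (hκ : 0 ≤ κ) (hκq : κ ^ (q - 1) ≤ n * γ * β - m) (ht : 0 < p.1) :
    ∑ j, pdx j (fun p' => radialWeight ((2 - β) / 2) p' * pdx j (supersolution β γ m κ) p') p
      + nl q (supersolution β γ m κ p) ≤ pdt (supersolution β γ m κ) p := by
  set t := p.1
  set r := ‖p.2‖ ^ 2
  have hr : 0 ≤ r := sq_nonneg _
  have hu := supersolution_nonneg (β := β) (γ := γ) (m := m) hκ p
  have hm0 : 0 < m := pos_of_mul_pos_left (hm.symm ▸ one_pos) (by linarith)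
  have hdrift : (γ * β / t) ^ 2 * (1 + r) ^ (β / 2 - 1) * r ≤ γ * (1 + r) ^ (β / 2) / t ^ 2 := by
    calc (γ * β / t) ^ 2 * (1 + r) ^ (β / 2 - 1) * r
        = γ * (γ * β ^ 2) * ((1 + r) ^ (β / 2 - 1) * r) / t ^ 2 := by ring
      _ ≤ γ * 1 * (1 + r) ^ (β / 2) / t ^ 2 := by
        gcongr
        exact rpow_sub_one_mul_le_rpow hr _
      _ = γ * (1 + r) ^ (β / 2) / t ^ 2 := by ring
  have hdecay : m * t / (1 + t ^ 2) ≤ m / t := by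
    rw [div_le_div_iff₀ (by positivity) ht]
    nlinarith
  have hcoeff : (γ * β / t) ^ 2 * (1 + r) ^ (β / 2 - 1) * r - n * (γ * β / t) + κ ^ (q - 1) / t
      ≤ γ * (1 + r) ^ (β / 2) / t ^ 2 - m * t / (1 + t ^ 2) := by
    have : κ ^ (q - 1) / t ≤ (n * γ * β - m) / t := div_le_div_of_nonneg_right hκq ht.le
    have : n * (γ * β / t) = n * γ * β / t := by ring
    have : (n * γ * β - m) / t = n * γ * β / t - m / t := sub_div _ _ _
    linarith
  rw [sum_pdx_radialWeight_mul_pdx_supersolution hγ ht, pdt_supersolution hγ ht]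
  calc _ ≤ ((γ * β / t) ^ 2 * (1 + r) ^ (β / 2 - 1) * r - n * (γ * β / t))
          * supersolution β γ m κ p + κ ^ (q - 1) / t * supersolution β γ m κ p := by
        gcongr
        exact nl_supersolution_le hm hq hγ hκ ht
    _ ≤ _ := by rw [← add_mul]; exact mul_le_mul_of_nonneg_right hcoeff hu

lemma supersolution_inequality (hm : m * (q - 1) = 1) (hq : 1 < q) (hγ : 0 < γ)
    (hγβ : γ * β ^ 2 ≤ 1) (hκ : 0 ≤ κ) (hκq : κ ^ (q - 1) ≤ n * γ * β - m) (p : Sp n) :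
    ∑ i, ∑ j, pdx i (fun p' => diagCoeffs (radialWeight ((2 - β) / 2)) i j p'
        * pdx j (supersolution β γ m κ) p') p
      + nl q (supersolution β γ m κ p) ≤ pdt (supersolution β γ m κ) p := by
  rw [sum_pdx_diagCoeffs_mul]
  rcases lt_or_ge 0 p.1 with ht | ht
  · exact supersolution_inequality_of_pos hm hq hγ hγβ hκ hκq ht
  have hcrit : ∀ y : EuclideanSpace ℝ (Fin n),
      fderiv ℝ (supersolution β γ m κ) (p.1, y) = 0 := fun y =>
    fderiv_eq_zero_of_nonneg_of_eq_zero (supersolution_nonneg hκ)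
      (supersolution_eq_zero_of_nonpos hγ.le (p := (p.1, y)) ht)
  have hflux : ∀ i, pdx i (fun p' => radialWeight ((2 - β) / 2) p'
      * pdx i (supersolution β γ m κ) p') p = 0 := fun i =>
    pdx_eq_zero_of_slice_eq_zero i fun y => by simp [pdx, hcrit y]
  simp [hflux, pdt, hcrit p.2, nl, supersolution_eq_zero_of_nonpos hγ.le ht]

end Inequality

lemma exists_exponent_between {n : ℕ} {α q : ℝ} (hn : 1 ≤ n) (hq1 : 1 < q)
    (hq2 : 1 + α / n < q) : ∃ β, α ≤ β ∧ 0 < β ∧ β < n * (q - 1) := by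
  have hn0 : (0 : ℝ) < n := by exact_mod_cast hn
  have hα : α < n * (q - 1) := by
    rw [mul_comm, ← div_lt_iff₀ hn0]
    linarith
  exact ⟨max α (n * (q - 1) / 2), le_max_left _ _,
    lt_max_of_lt_right (by have := sub_pos.2 hq1; positivity), max_lt hα (by nlinarith)⟩

/-- **Combined sharpness statement**: for any `α ∈ ℝ` and any `q` with `q > 1` and
`q > 1 + α/n` there is an operator with coefficients satisfying the standing assumptions
and condition (8) with exponent `α`, and a nontrivial nonnegative `C^∞` classical solution
of `u_t ≥ Σ ∂_{x_i}(a_{ij} ∂_{x_j}u) + |u|^{q−1}u` in the whole space. -/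
theorem combined_sharpness (n : ℕ) (hn : 1 ≤ n) (α q : ℝ)
    (hq1 : 1 < q) (hq2 : 1 + α / n < q) :
    ∃ a : Fin n → Fin n → Sp n → ℝ, ∃ A : Sp n → ℝ,
      Coeffs n a A ∧
      (∃ c : ℝ, 0 < c ∧ Cond8 A α c) ∧
      ∃ u : Sp n → ℝ,
        ContDiff ℝ (⊤ : ℕ∞) u ∧
        (∀ p, 0 ≤ u p) ∧
        u ≠ 0 ∧
        ∀ p : Sp n,
          (∑ i : Fin n, ∑ j : Fin n, pdx i (fun p' => a i j p' * pdx j u p') p) + nl q (u p) ≤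
            pdt u p := by
  obtain ⟨β, hαβ, hβ, hβq⟩ := exists_exponent_between hn hq1 hq2
  have hq0 : 0 < q - 1 := sub_pos.2 hq1
  set m := (q - 1)⁻¹
  set γ := (β ^ 2)⁻¹
  have hm : m * (q - 1) = 1 := inv_mul_cancel₀ hq0.ne'
  have hγ : 0 < γ := by positivity
  have hγβ : γ * β ^ 2 = 1 := inv_mul_cancel₀ (by positivity)
  have hδ : 0 < n * γ * β - m := by
    have : n * γ * β = n / β := by field_simp; exact hγβ
    rw [this, sub_pos, lt_div_iff₀ hβ, inv_mul_eq_div, div_lt_iff₀ hq0]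
    linarith
  set κ := (n * γ * β - m) ^ m
  have hκ : 0 < κ := rpow_pos_of_pos hδ m
  have hκq : κ ^ (q - 1) = n * γ * β - m := by rw [← rpow_mul hδ.le, hm, rpow_one]
  refine ⟨diagCoeffs (radialWeight ((2 - β) / 2)), radialWeight ((2 - β) / 2),
    coeffs_diagCoeffs (contDiff_radialWeight _ (k := 0)).continuous
      fun p => (radialWeight_pos _ p).le,
    ⟨_, by positivity, cond8_radialWeight hαβ⟩,
    supersolution β γ m κ, contDiff_supersolution hγ, supersolution_nonneg hκ.le,
    fun h => (supersolution_pos hκ hγ (p := (1, 0)) one_pos).ne' (congrFun h _),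
    supersolution_inequality hm hq1 hγ hγβ.le hκ.le hκq.le⟩
end
end
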